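/- The map Ψ_{2,2} : Sym^2(Sym^2 V) → Sym^2(Sym^2 V) is injective (equivalently, an isomorphism) for any finite-dimensional complex vector space V with dim V ≥ 2. -/

import Mathlib

/-!
On the generators `(x y)(z w)` of `Sym² Sym² V`, `Ψ = Ψ_{2,2}` acts by
`Ψ ((x y)(z w)) = ½ ((x z)(y w) + (x w)(y z))`. Applying this twice gives the quadratic
relation `2 Ψ² = Ψ + 1`, so `Ψ` is invertible with inverse `2 Ψ - 1` (its eigenvalues are `1`
and `-½`).
-/

noncomputable section
open PiTensorProduct TensorProduct

namespace Foulkes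

variable (V : Type) [AddCommGroup V] [Module ℂ V]
variable (W : Type) [AddCommGroup W] [Module ℂ W]

/-- The action of a permutation on the tensor power, permuting the tensor factors. -/
def permAct (n : ℕ) (π : Equiv.Perm (Fin n)) : (⨂[ℂ]^n V) ≃ₗ[ℂ] ⨂[ℂ]^n V :=
  PiTensorProduct.reindex ℂ (fun _ => V) π

/-- The subspace of symmetric tensors in the `n`-th tensor power. -/
def SymT (n : ℕ) : Submodule ℂ (⨂[ℂ]^n V) :=
  ⨅ π : Equiv.Perm (Fin n), LinearMap.ker ((permAct V n π).toLinearMap - LinearMap.id)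

lemma mem_SymT {n : ℕ} {x : ⨂[ℂ]^n V} :
    x ∈ SymT V n ↔ ∀ π : Equiv.Perm (Fin n), permAct V n π x = x := by
  simp [SymT, Submodule.mem_iInf, LinearMap.mem_ker, LinearMap.sub_apply, sub_eq_zero]

/-- The symmetrization operator on the `n`-th tensor power. -/
def symmetrize (n : ℕ) : (⨂[ℂ]^n V) →ₗ[ℂ] ⨂[ℂ]^n V :=
  ((n.factorial : ℂ))⁻¹ • ∑ π : Equiv.Perm (Fin n), (permAct V n π).toLinearMap

lemma permAct_symmetrize (n : ℕ) (π : Equiv.Perm (Fin n)) (x : ⨂[ℂ]^n V) :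
    permAct V n π (symmetrize V n x) = symmetrize V n x := by
  unfold symmetrize
  rw [LinearMap.smul_apply, map_smul, LinearMap.sum_apply, map_sum]
  congr 1
  refine Fintype.sum_equiv (Equiv.mulLeft π)
    (fun σ => permAct V n π ((permAct V n σ).toLinearMap x))
    (fun σ => (permAct V n σ).toLinearMap x) (fun σ => ?_)
  simp only [LinearEquiv.coe_coe, Equiv.coe_mulLeft]
  unfold permAct
  exact PiTensorProduct.reindex_reindex (σ : Fin n ≃ Fin n) (π : Fin n ≃ Fin n) x

lemma symmetrize_mem (n : ℕ) (x : ⨂[ℂ]^n V) : symmetrize V n x ∈ SymT V n :=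
  (mem_SymT V).2 fun π => permAct_symmetrize V n π x

/-- The canonical projection onto symmetric tensors. -/
def projSym (n : ℕ) : (⨂[ℂ]^n V) →ₗ[ℂ] SymT V n :=
  (symmetrize V n).codRestrict _ (symmetrize_mem V n)

variable {V W} in
lemma map_mem_SymT {n : ℕ} (f : V →ₗ[ℂ] W) {x : ⨂[ℂ]^n V} (hx : x ∈ SymT V n) :
    (PiTensorProduct.map fun _ => f) x ∈ SymT W n := by
  rw [mem_SymT] at hx ⊢
  intro π
  unfold permAct at hx ⊢
  have h := PiTensorProduct.map_reindex (fun _ : Fin n => f) (π : Fin n ≃ Fin n) x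
  rw [← h, hx π]

variable {V W} in
/-- The map on symmetric tensors induced functorially by a linear map. -/
def symMap (n : ℕ) (f : V →ₗ[ℂ] W) : SymT V n →ₗ[ℂ] SymT W n :=
  LinearMap.codRestrict _ ((PiTensorProduct.map fun _ => f) ∘ₗ (SymT V n).subtype)
    (fun x => map_mem_SymT f x.2)

lemma tprod_const_mem (n : ℕ) (v : V) : (tprod ℂ fun _ : Fin n => v) ∈ SymT V n := by
  simp [mem_SymT, permAct, PiTensorProduct.reindex_tprod]

/-- Flattening a tensor power of tensor powers. -/
def flat (b : ℕ) : ∀ a : ℕ, (⨂[ℂ] _ : Fin a, (⨂[ℂ]^b V)) ≃ₗ[ℂ] ⨂[ℂ] _ : Fin a × Fin b, V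
  | 0 => (isEmptyEquiv (Fin 0)).trans (isEmptyEquiv (Fin 0 × Fin b)).symm
  | (a + 1) =>
    (PiTensorProduct.reindex ℂ (fun _ => ⨂[ℂ]^b V)
        (finSumFinEquiv (m := a) (n := 1)).symm).trans <|
      (tmulEquiv ℂ (⨂[ℂ]^b V)).symm.trans <|
        (TensorProduct.congr (flat b a) (subsingletonEquiv (0 : Fin 1))).trans <|
          (tmulEquiv ℂ V).trans <|
            PiTensorProduct.reindex ℂ (fun _ => V)
              (((Equiv.sumCongr (Equiv.refl (Fin a × Fin b))
                    (Equiv.uniqueProd (Fin b) (Fin 1)).symm).trans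
                  (Equiv.sumProdDistrib (Fin a) (Fin 1) (Fin b)).symm).trans
                (Equiv.prodCongr finSumFinEquiv (Equiv.refl (Fin b))))

/-- The canonical reordering isomorphism `⊗^a ⊗^b V ≅ ⊗^b ⊗^a V`
exchanging the tensor factors. -/
def reorder (a b : ℕ) : (⨂[ℂ]^a (⨂[ℂ]^b V)) ≃ₗ[ℂ] ⨂[ℂ]^b (⨂[ℂ]^a V) :=
  (flat V b a).trans <|
    (PiTensorProduct.reindex ℂ (fun _ => V) (Equiv.prodComm (Fin a) (Fin b))).trans
      (flat V a b).symm

/-- The Foulkes–Howe map `Ψ_{a,b} : Sym^a Sym^b V → Sym^b Sym^a V`: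
the composition of the inclusion of symmetric tensors into `⊗^a ⊗^b V`,
the reordering isomorphism `⊗^a ⊗^b V ≅ ⊗^b ⊗^a V`, and the canonical
projection onto `Sym^b Sym^a V`. -/
def Psi (a b : ℕ) : SymT (SymT V b) a →ₗ[ℂ] SymT (SymT V a) b :=
  projSym (SymT V a) b ∘ₗ
    (PiTensorProduct.map fun _ : Fin b => projSym V a) ∘ₗ
      (reorder V a b).toLinearMap ∘ₗ
        (PiTensorProduct.map fun _ : Fin a => (SymT V b).subtype) ∘ₗ
          (SymT (SymT V b) a).subtype

section Symmetrization

variable {V} {n : ℕ}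

lemma permAct_tprod (π : Equiv.Perm (Fin n)) (f : Fin n → V) :
    permAct V n π (tprod ℂ f) = tprod ℂ fun i => f (π.symm i) :=
  reindex_tprod (π : Fin n ≃ Fin n) f

lemma permAct_permAct (σ π : Equiv.Perm (Fin n)) (x : ⨂[ℂ]^n V) :
    permAct V n σ (permAct V n π x) = permAct V n (σ * π) x :=
  reindex_reindex (π : Fin n ≃ Fin n) (σ : Fin n ≃ Fin n) x

lemma symmetrize_permAct (π : Equiv.Perm (Fin n)) (x : ⨂[ℂ]^n V) :
    symmetrize V n (permAct V n π x) = symmetrize V n x := by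
  simp only [symmetrize, LinearMap.smul_apply, LinearMap.sum_apply, LinearEquiv.coe_coe,
    permAct_permAct]
  congr 1
  exact Fintype.sum_equiv (Equiv.mulRight π) _ _ fun _ => rfl

lemma symmetrize_of_mem {x : ⨂[ℂ]^n V} (hx : x ∈ SymT V n) : symmetrize V n x = x := by
  rw [mem_SymT] at hx
  simp only [symmetrize, LinearMap.smul_apply, LinearMap.sum_apply, LinearEquiv.coe_coe, hx,
    Finset.sum_const, Finset.card_univ, Fintype.card_perm, Fintype.card_fin,
    ← Nat.cast_smul_eq_nsmul ℂ, smul_smul]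
  rw [inv_mul_cancel₀ (by exact_mod_cast n.factorial_ne_zero), one_smul]

lemma coe_projSym (x : ⨂[ℂ]^n V) : (projSym V n x : ⨂[ℂ]^n V) = symmetrize V n x :=
  rfl

lemma projSym_permAct (π : Equiv.Perm (Fin n)) (x : ⨂[ℂ]^n V) :
    projSym V n (permAct V n π x) = projSym V n x :=
  Subtype.ext (symmetrize_permAct π x)

lemma projSym_comp_subtype : projSym V n ∘ₗ (SymT V n).subtype = LinearMap.id :=
  LinearMap.ext fun y => Subtype.ext (symmetrize_of_mem y.2)

end Symmetrization

section Reorder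

variable {V}

lemma flat_tprod (b a : ℕ) (v : Fin a → Fin b → V) :
    flat V b a (tprod ℂ fun i => tprod ℂ (v i)) = tprod ℂ fun p : Fin a × Fin b => v p.1 p.2 := by
  induction a with
  | zero => rw [flat, LinearEquiv.trans_apply, LinearEquiv.symm_apply_eq, isEmptyEquiv_apply_tprod,
      isEmptyEquiv_apply_tprod]
  | succ a ih =>
    simp only [flat, LinearEquiv.trans_apply, reindex_tprod, tmulEquiv_symm_apply,
      TensorProduct.congr_tmul, subsingletonEquiv_apply_tprod, ih, tmulEquiv_apply]
    congr 1
    funext ⟨i, j⟩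
    induction i using Fin.lastCases with
    | last =>
      rw [show Fin.last a = Fin.natAdd a (0 : Fin 1) by ext; simp]
      simp [Equiv.sumProdDistrib, Equiv.uniqueProd]
    | cast i =>
      rw [show i.castSucc = Fin.castAdd 1 i from rfl]
      simp [Equiv.sumProdDistrib, Equiv.uniqueProd]

lemma reorder_tprod (a b : ℕ) (v : Fin a → Fin b → V) :
    reorder V a b (tprod ℂ fun i => tprod ℂ (v i)) = tprod ℂ fun j => tprod ℂ fun i => v i j := by
  rw [reorder, LinearEquiv.trans_apply, LinearEquiv.trans_apply, flat_tprod, reindex_tprod,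
    LinearEquiv.symm_apply_eq, flat_tprod]
  rfl

lemma tensorPower_tensorPower_ext {M : Type*} [AddCommMonoid M] [Module ℂ M] {a b : ℕ}
    {f g : (⨂[ℂ]^a (⨂[ℂ]^b V)) →ₗ[ℂ] M}
    (h : ∀ v : Fin a → Fin b → V,
      f (tprod ℂ fun i => tprod ℂ (v i)) = g (tprod ℂ fun i => tprod ℂ (v i))) :
    f = g := by
  suffices f ∘ₗ (flat V b a).symm.toLinearMap = g ∘ₗ (flat V b a).symm.toLinearMap by
    simpa [LinearMap.comp_assoc] using congrArg (· ∘ₗ (flat V b a).toLinearMap) this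
  refine PiTensorProduct.ext (MultilinearMap.ext fun w => ?_)
  have hw : (flat V b a).symm (tprod ℂ w) = tprod ℂ fun i => tprod ℂ fun j => w (i, j) := by
    rw [LinearEquiv.symm_apply_eq, flat_tprod]
  simpa [hw] using h fun i j => w (i, j)

end Reorder

def symIncl (a b : ℕ) : SymT (SymT V b) a →ₗ[ℂ] ⨂[ℂ]^a (⨂[ℂ]^b V) :=
  (PiTensorProduct.map fun _ : Fin a => (SymT V b).subtype) ∘ₗ (SymT (SymT V b) a).subtype

def symProj (a b : ℕ) : (⨂[ℂ]^a (⨂[ℂ]^b V)) →ₗ[ℂ] SymT (SymT V b) a :=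
  projSym (SymT V b) a ∘ₗ PiTensorProduct.map fun _ : Fin a => projSym V b

lemma Psi_eq_symProj_reorder_symIncl (a b : ℕ) :
    Psi V a b = symProj V b a ∘ₗ (reorder V a b).toLinearMap ∘ₗ symIncl V a b :=
  rfl

lemma symProj_symIncl (a b : ℕ) (u : SymT (SymT V b) a) : symProj V a b (symIncl V a b u) = u := by
  have hmap : (PiTensorProduct.map fun _ : Fin a => projSym V b) ∘ₗ
      (PiTensorProduct.map fun _ : Fin a => (SymT V b).subtype) = LinearMap.id := by
    rw [← PiTensorProduct.map_comp, projSym_comp_subtype, PiTensorProduct.map_id]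
  change projSym (SymT V b) a (((PiTensorProduct.map fun _ : Fin a => projSym V b) ∘ₗ
    (PiTensorProduct.map fun _ : Fin a => (SymT V b).subtype)) (u : ⨂[ℂ]^a (SymT V b))) = u
  rw [hmap, LinearMap.id_apply]
  exact congr($projSym_comp_subtype u)

section DegreeTwo

variable {V}

-- `![x, y] = Fin.cons x ![y]`, so linearity in either slot is `cons_add` / `cons_smul`.
def tprod₂ : V →ₗ[ℂ] V →ₗ[ℂ] ⨂[ℂ]^2 V :=
  let t := PiTensorProduct.tprod ℂ (s := fun _ : Fin 2 => V)
  LinearMap.mk₂ ℂ (fun x y => t ![x, y])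
    (fun _ _ y => t.cons_add ![y] _ _)
    (fun _ _ y => t.cons_smul ![y] _ _)
    (fun x _ _ => (t.curryLeft x).cons_add ![] _ _)
    (fun _ x _ => (t.curryLeft x).cons_smul ![] _ _)

lemma tprod₂_apply (x y : V) : tprod₂ x y = tprod ℂ ![x, y] := rfl

lemma map_tprod₂ (f : V →ₗ[ℂ] W) (x y : V) :
    (PiTensorProduct.map fun _ : Fin 2 => f) (tprod₂ x y) = tprod₂ (f x) (f y) := by
  rw [tprod₂_apply, tprod₂_apply, map_tprod]
  congr 1
  funext i
  fin_cases i <;> rfl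

lemma tprod_eq_tprod₂ (f : Fin 2 → V) : tprod ℂ f = tprod₂ (f 0) (f 1) := by
  rw [tprod₂_apply]
  congr 1
  funext i
  fin_cases i <;> rfl

lemma permAct_swap_tprod₂ (x y : V) : permAct V 2 (Equiv.swap 0 1) (tprod₂ x y) = tprod₂ y x := by
  rw [tprod₂_apply, permAct_tprod, tprod_eq_tprod₂]
  rfl

lemma symmetrize_tprod₂ (x y : V) :
    symmetrize V 2 (tprod₂ x y) = (2 : ℂ)⁻¹ • (tprod₂ x y + tprod₂ y x) := by
  have huniv : (Finset.univ : Finset (Equiv.Perm (Fin 2))) = {1, Equiv.swap 0 1} := by decide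
  rw [symmetrize, LinearMap.smul_apply, LinearMap.sum_apply, huniv,
    Finset.sum_pair (by decide)]
  have h_one : permAct V 2 1 (tprod₂ x y) = tprod₂ x y := by
    rw [tprod₂_apply, permAct_tprod]
    rfl
  simp [h_one, permAct_swap_tprod₂, Nat.factorial]

lemma projSym_tprod₂_comm (x y : V) : projSym V 2 (tprod₂ x y) = projSym V 2 (tprod₂ y x) := by
  rw [← projSym_permAct (Equiv.swap 0 1), permAct_swap_tprod₂]

lemma reorder_tprod₂ (a b c d : V) :
    reorder V 2 2 (tprod₂ (tprod₂ a b) (tprod₂ c d)) = tprod₂ (tprod₂ a c) (tprod₂ b d) := by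
  have h := reorder_tprod (V := V) 2 2 ![![a, b], ![c, d]]
  simp only [tprod_eq_tprod₂] at h
  exact h

def symProd (x y : V) : SymT V 2 := projSym V 2 (tprod₂ x y)

def symProd₂ (x y z w : V) : SymT (SymT V 2) 2 :=
  symProj V 2 2 (tprod₂ (tprod₂ x y) (tprod₂ z w))

lemma symProj_tprod₂_tprod₂ (x y z w : V) :
    symProj V 2 2 (tprod₂ (tprod₂ x y) (tprod₂ z w)) = symProd₂ x y z w :=
  rfl

lemma symProd₂_eq (x y z w : V) :
    symProd₂ x y z w = projSym (SymT V 2) 2 (tprod₂ (symProd x y) (symProd z w)) := by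
  rw [symProd₂, symProj, LinearMap.comp_apply, map_tprod₂]
  rfl

lemma coe_symProd (x y : V) :
    (symProd x y : ⨂[ℂ]^2 V) = (2 : ℂ)⁻¹ • (tprod₂ x y + tprod₂ y x) := by
  rw [symProd, coe_projSym, symmetrize_tprod₂]

lemma symProd_comm (x y : V) : symProd x y = symProd y x := projSym_tprod₂_comm x y

lemma symProd₂_comm_left (x y z w : V) : symProd₂ x y z w = symProd₂ y x z w := by
  rw [symProd₂_eq, symProd_comm x y, ← symProd₂_eq]

lemma symProd₂_comm_right (x y z w : V) : symProd₂ x y z w = symProd₂ x y w z := by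
  rw [symProd₂_eq, symProd_comm z w, ← symProd₂_eq]

lemma symProd₂_comm (x y z w : V) : symProd₂ x y z w = symProd₂ z w x y := by
  rw [symProd₂_eq, symProd₂_eq, projSym_tprod₂_comm]

end DegreeTwo

section PsiTwoTwo

variable {V}

lemma Psi_symProd₂ (x y z w : V) :
    Psi V 2 2 (symProd₂ x y z w) = (2 : ℂ)⁻¹ • (symProd₂ x z y w + symProd₂ x w y z) := by
  have hincl : symIncl V 2 2 (symProd₂ x y z w) = (2 : ℂ)⁻¹ •
      (tprod₂ (symProd x y : ⨂[ℂ]^2 V) (symProd z w) +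
        tprod₂ (symProd z w : ⨂[ℂ]^2 V) (symProd x y)) := by
    rw [symIncl, LinearMap.comp_apply, Submodule.subtype_apply, symProd₂_eq, coe_projSym,
      symmetrize_tprod₂, map_smul, map_add, map_tprod₂, map_tprod₂]
    rfl
  rw [Psi_eq_symProj_reorder_symIncl, LinearMap.comp_apply, LinearMap.comp_apply, hincl]
  simp only [coe_symProd, map_add, map_smul, LinearMap.add_apply, LinearMap.smul_apply,
    LinearEquiv.coe_coe, reorder_tprod₂, symProj_tprod₂_tprod₂]
  have h₁ : symProd₂ y z x w = symProd₂ x w y z := symProd₂_comm ..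
  have h₂ : symProd₂ y w x z = symProd₂ x z y w := symProd₂_comm ..
  have h₃ : symProd₂ z x w y = symProd₂ x z y w := by rw [symProd₂_comm_left, symProd₂_comm_right]
  have h₄ : symProd₂ w x z y = symProd₂ x w y z := by rw [symProd₂_comm_left, symProd₂_comm_right]
  have h₅ : symProd₂ z y w x = symProd₂ x w y z := by
    rw [← h₁, symProd₂_comm_left, symProd₂_comm_right]
  have h₆ : symProd₂ w y z x = symProd₂ x z y w := by
    rw [← h₂, symProd₂_comm_left, symProd₂_comm_right]
  rw [h₁, h₂, h₃, h₄, h₅, h₆]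
  module

lemma two_smul_Psi_Psi (u : SymT (SymT V 2) 2) :
    (2 : ℂ) • Psi V 2 2 (Psi V 2 2 u) = Psi V 2 2 u + u := by
  suffices h : ((2 : ℂ) • (Psi V 2 2 ∘ₗ Psi V 2 2)) ∘ₗ symProj V 2 2 =
      (Psi V 2 2 + LinearMap.id) ∘ₗ symProj V 2 2 by
    simpa [symProj_symIncl] using congr($h (symIncl V 2 2 u))
  apply tensorPower_tensorPower_ext
  intro v
  simp only [tprod_eq_tprod₂, symProj_tprod₂_tprod₂, LinearMap.comp_apply, LinearMap.smul_apply,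
    LinearMap.add_apply, LinearMap.id_apply]
  rw [Psi_symProd₂, map_smul, map_add, Psi_symProd₂, Psi_symProd₂,
    symProd₂_comm_right (v 0 0) (v 1 1), symProd₂_comm_right (v 0 0) (v 0 1),
    symProd₂_comm_right (v 0 0) (v 1 0)]
  module

end PsiTwoTwo

theorem Psi_two_two_injective_general (V : Type) [AddCommGroup V] [Module ℂ V] :
    Function.Injective (Psi V 2 2) ∧ Function.Bijective (Psi V 2 2) := by
  -- `-1 •` rather than subtraction: instance search finds no `AddCommGroup` on `Sym² Sym² V`.
  have hinv (u : SymT (SymT V 2) 2) :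
      (2 : ℂ) • Psi V 2 2 (Psi V 2 2 u) + (-1 : ℂ) • Psi V 2 2 u = u := by
    rw [two_smul_Psi_Psi]
    module
  have hleft : Function.LeftInverse (fun u => (2 : ℂ) • Psi V 2 2 u + (-1 : ℂ) • u) (Psi V 2 2) :=
    hinv
  have hright : Function.RightInverse (fun u => (2 : ℂ) • Psi V 2 2 u + (-1 : ℂ) • u) (Psi V 2 2) :=
    fun u => by simpa using hinv u
  exact ⟨hleft.injective, hleft.injective, hright.surjective⟩

/-- `Ψ_{2,2} : Sym²Sym² V → Sym²Sym² V` is injective (equivalently, an isomorphism)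
whenever `dim V ≥ 2`. -/
theorem Psi_two_two_injective (V : Type) [AddCommGroup V] [Module ℂ V]
    [FiniteDimensional ℂ V] (hdim : 2 ≤ Module.finrank ℂ V) :
    Function.Injective (Psi V 2 2) ∧ Function.Bijective (Psi V 2 2) :=
  Psi_two_two_injective_general V

end Foulkes
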